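/- Suppose R_Y ⫫ (M, Y) | (X, A, R_M) and all conditional probabilities below are strictly between 0 and 1. Then odds(R_M = 0 | X, A, Y) / odds(R_M = 0 | X, A, Y, R_Y = 1) = P(R_Y = 1 | X, A, R_M = 1) / P(R_Y = 1 | X, A, R_M = 0). -/

import Mathlib

/-
Conditioning on `R_Y = 1` multiplies the odds of `R_M = 0` given `(X, A, Y)` by the likelihood
ratio `P(R_Y = 1 | X, A, Y, R_M = 0) / P(R_Y = 1 | X, A, Y, R_M = 1)` (Bayes' rule in odds form).
Since `R_Y ⫫ (M, Y) | (X, A, R_M)`, the probability `P(R_Y = 1 | M, Y, X, A, R_M)` is constant on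
the fibres of `M` inside `{Y = y}`, so averaging over these fibres drops `Y` from the conditioning.
-/

open scoped Classical

noncomputable def Pr {Ω : Type*} [Fintype Ω] (p : Ω → ℝ) (E : Ω → Prop) : ℝ :=
  ∑ ω, if E ω then p ω else 0

noncomputable def cPr {Ω : Type*} [Fintype Ω] (p : Ω → ℝ) (E F : Ω → Prop) : ℝ :=
  Pr p (fun ω => E ω ∧ F ω) / Pr p F

noncomputable def odds {Ω : Type*} [Fintype Ω] (p : Ω → ℝ) (E F : Ω → Prop) : ℝ :=
  cPr p E F / cPr p (fun ω => ¬ E ω) F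

section Pr

variable {Ω : Type*} [Fintype Ω]

theorem Pr_congr (p : Ω → ℝ) {E F : Ω → Prop} (h : ∀ ω, E ω ↔ F ω) : Pr p E = Pr p F := by
  simp only [Pr, h]

theorem cPr_congr_right (p : Ω → ℝ) (E : Ω → Prop) {F F' : Ω → Prop} (h : ∀ ω, F ω ↔ F' ω) :
    cPr p E F = cPr p E F' := by
  obtain rfl : F = F' := funext fun ω => propext (h ω)
  rfl

theorem Pr_nonneg {p : Ω → ℝ} (hp : ∀ ω, 0 ≤ p ω) (E : Ω → Prop) : 0 ≤ Pr p E :=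
  Finset.sum_nonneg fun ω _ => by split_ifs <;> simp [hp ω]

theorem Pr_mono {p : Ω → ℝ} (hp : ∀ ω, 0 ≤ p ω) {E F : Ω → Prop} (h : ∀ ω, E ω → F ω) :
    Pr p E ≤ Pr p F :=
  Finset.sum_le_sum fun ω _ => by
    by_cases hE : E ω
    · simp [hE, h ω hE]
    · by_cases hF : F ω <;> simp [hE, hF, hp ω]

theorem Pr_eq_sum_fiber {ℳ : Type*} (p : Ω → ℝ) (M : Ω → ℳ) (E : Ω → Prop) :
    Pr p E = ∑ m ∈ Finset.univ.image M, Pr p (fun ω => M ω = m ∧ E ω) := by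
  simp only [Pr]
  rw [Finset.sum_comm]
  refine Finset.sum_congr rfl fun ω _ => ?_
  rw [Finset.sum_eq_single_of_mem (M ω) (Finset.mem_image_of_mem M (Finset.mem_univ ω))]
  · simp
  · intro m _ hm
    simp [Ne.symm hm]

theorem cPr_eq_of_cPr_fiber_eq {ℳ : Type*} {p : Ω → ℝ} (hp : ∀ ω, 0 ≤ p ω) (M : Ω → ℳ)
    {E G : Ω → Prop} {c : ℝ} (hG : Pr p G ≠ 0)
    (h : ∀ m, 0 < Pr p (fun ω => M ω = m ∧ G ω) → cPr p E (fun ω => M ω = m ∧ G ω) = c) :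
    cPr p E G = c := by
  rw [cPr, div_eq_iff hG, Pr_eq_sum_fiber p M, Pr_eq_sum_fiber p M G, Finset.mul_sum]
  refine Finset.sum_congr rfl fun m _ => ?_
  rcases (Pr_nonneg hp fun ω => M ω = m ∧ G ω).lt_or_eq with hm | hm
  · rw [← h m hm, cPr, div_mul_cancel₀ _ hm.ne']
    exact Pr_congr p fun ω => by tauto
  · rw [← hm, mul_zero]
    exact le_antisymm ((Pr_mono hp fun ω h => ⟨h.1, h.2.2⟩).trans hm.ge) (Pr_nonneg hp _)

theorem odds_eq_div (p : Ω → ℝ) (E : Ω → Prop) {F : Ω → Prop} (hF : Pr p F ≠ 0) :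
    odds p E F = Pr p (fun ω => E ω ∧ F ω) / Pr p (fun ω => ¬ E ω ∧ F ω) :=
  div_div_div_cancel_right₀ hF _ _

theorem odds_div_odds_and {p : Ω → ℝ} (hp : ∀ ω, 0 ≤ p ω) {E F R G : Ω → Prop}
    (hG : ∀ ω, G ω ↔ F ω ∧ R ω) (hE : 0 < Pr p (fun ω => E ω ∧ F ω ∧ R ω))
    (hnE : 0 < Pr p (fun ω => ¬ E ω ∧ F ω ∧ R ω)) :
    odds p E F / odds p E G
      = cPr p R (fun ω => ¬ E ω ∧ F ω) / cPr p R (fun ω => E ω ∧ F ω) := by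
  obtain rfl : G = fun ω => F ω ∧ R ω := funext fun ω => propext (hG ω)
  have hEF : Pr p (fun ω => E ω ∧ F ω) ≠ 0 :=
    (hE.trans_le (Pr_mono hp fun ω h => ⟨h.1, h.2.1⟩)).ne'
  have hnEF : Pr p (fun ω => ¬ E ω ∧ F ω) ≠ 0 :=
    (hnE.trans_le (Pr_mono hp fun ω h => ⟨h.1, h.2.1⟩)).ne'
  rw [odds_eq_div p E (hE.trans_le (Pr_mono hp fun ω h => h.2.1)).ne',
    odds_eq_div p E (hE.trans_le (Pr_mono hp fun ω h => h.2)).ne', cPr, cPr,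
    Pr_congr p (E := fun ω => R ω ∧ E ω ∧ F ω)
      fun ω => and_left_comm.trans (and_congr_right' and_comm),
    Pr_congr p (E := fun ω => R ω ∧ ¬ E ω ∧ F ω)
      fun ω => and_left_comm.trans (and_congr_right' and_comm)]
  field_simp [hEF, hnEF, hE.ne', hnE.ne']

end Pr

theorem S5_odds_step_general
    {Ω 𝒳 𝒜 ℳ 𝒴 : Type*} [Fintype Ω]
    (p : Ω → ℝ) (hp : ∀ ω, 0 ≤ p ω)
    (X : Ω → 𝒳) (A : Ω → 𝒜) (M : Ω → ℳ) (Y : Ω → 𝒴) (RM RY : Ω → ℕ)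
    (hRM : ∀ ω, RM ω = 0 ∨ RM ω = 1)
    -- R_Y ⫫ (M, Y) ∣ (X, A, R_M)
    (h2 : ∀ (ry : ℕ) (m : ℳ) (y : 𝒴) (x : 𝒳) (a : 𝒜) (rm : ℕ),
      0 < Pr p (fun ω => M ω = m ∧ Y ω = y ∧ X ω = x ∧ A ω = a ∧ RM ω = rm) →
      cPr p (fun ω => RY ω = ry)
          (fun ω => M ω = m ∧ Y ω = y ∧ X ω = x ∧ A ω = a ∧ RM ω = rm)
        = cPr p (fun ω => RY ω = ry) (fun ω => X ω = x ∧ A ω = a ∧ RM ω = rm)) :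
    ∀ (x : 𝒳) (a : 𝒜) (y : 𝒴),
      (∀ r s : Fin 2, 0 < Pr p (fun ω => RM ω = (r : ℕ) ∧ RY ω = (s : ℕ) ∧
          X ω = x ∧ A ω = a ∧ Y ω = y)) →
      odds p (fun ω => RM ω = 0) (fun ω => X ω = x ∧ A ω = a ∧ Y ω = y)
          / odds p (fun ω => RM ω = 0) (fun ω => X ω = x ∧ A ω = a ∧ Y ω = y ∧ RY ω = 1)
        = cPr p (fun ω => RY ω = 1) (fun ω => X ω = x ∧ A ω = a ∧ RM ω = 1)
          / cPr p (fun ω => RY ω = 1) (fun ω => X ω = x ∧ A ω = a ∧ RM ω = 0) := by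
  intro x a y hpos
  have drop_Y : ∀ r : ℕ,
      0 < Pr p (fun ω => RM ω = r ∧ RY ω = 1 ∧ X ω = x ∧ A ω = a ∧ Y ω = y) →
      cPr p (fun ω => RY ω = 1) (fun ω => Y ω = y ∧ X ω = x ∧ A ω = a ∧ RM ω = r)
        = cPr p (fun ω => RY ω = 1) (fun ω => X ω = x ∧ A ω = a ∧ RM ω = r) := fun r hr =>
    cPr_eq_of_cPr_fiber_eq hp M (hr.trans_le (Pr_mono hp fun ω h => by tauto)).ne'
      fun m => h2 1 m y x a r
  rw [odds_div_odds_and hp (R := fun ω => RY ω = 1) (fun ω => by tauto)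
      ((hpos 0 1).trans_le (Pr_mono hp fun ω h => by tauto))
      ((hpos 1 1).trans_le (Pr_mono hp fun ω h => by grind)),
    ← drop_Y 1 (hpos 1 1), ← drop_Y 0 (hpos 0 1)]
  congr 1 <;> refine cPr_congr_right p _ fun ω => ?_
  · have := hRM ω; grind
  · tauto

/-- Key odds-tilting step in identification under Model S5. -/
theorem S5_odds_step
    {Ω 𝒳 𝒜 ℳ 𝒴 : Type*} [Fintype Ω]
    (p : Ω → ℝ) (hp : ∀ ω, 0 ≤ p ω) (hsum : ∑ ω, p ω = 1)
    (X : Ω → 𝒳) (A : Ω → 𝒜) (M : Ω → ℳ) (Y : Ω → 𝒴) (RM RY : Ω → ℕ)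
    (hRM : ∀ ω, RM ω = 0 ∨ RM ω = 1) (hRY : ∀ ω, RY ω = 0 ∨ RY ω = 1)
    -- R_Y ⫫ (M, Y) ∣ (X, A, R_M)
    (h2 : ∀ (ry : ℕ) (m : ℳ) (y : 𝒴) (x : 𝒳) (a : 𝒜) (rm : ℕ),
      0 < Pr p (fun ω => M ω = m ∧ Y ω = y ∧ X ω = x ∧ A ω = a ∧ RM ω = rm) →
      cPr p (fun ω => RY ω = ry)
          (fun ω => M ω = m ∧ Y ω = y ∧ X ω = x ∧ A ω = a ∧ RM ω = rm)
        = cPr p (fun ω => RY ω = ry) (fun ω => X ω = x ∧ A ω = a ∧ RM ω = rm)) :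
    ∀ (x : 𝒳) (a : 𝒜) (y : 𝒴),
      (∀ r s : Fin 2, 0 < Pr p (fun ω => RM ω = (r : ℕ) ∧ RY ω = (s : ℕ) ∧
          X ω = x ∧ A ω = a ∧ Y ω = y)) →
      odds p (fun ω => RM ω = 0) (fun ω => X ω = x ∧ A ω = a ∧ Y ω = y)
          / odds p (fun ω => RM ω = 0) (fun ω => X ω = x ∧ A ω = a ∧ Y ω = y ∧ RY ω = 1)
        = cPr p (fun ω => RY ω = 1) (fun ω => X ω = x ∧ A ω = a ∧ RM ω = 1)
          / cPr p (fun ω => RY ω = 1) (fun ω => X ω = x ∧ A ω = a ∧ RM ω = 0) :=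
  S5_odds_step_general p hp X A M Y RM RY hRM h2
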